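/- arXiv:1011.3698 — 4 statements merged into one kernel-verified Lean document; each statement's English description precedes it below -/
import Mathlib

section
/- Let M be a linearly ordered set and for finite subsets H, J of M define α(H,J) = (-1)^{|{(i,j) ∈ H × J : j < i}|} (an integer equal to ±1). Then for all finite subsets H, J, K of M one has α(H,J) · α(H Δ J, K) = α(H, J Δ K) · α(J,K), where Δ denotes symmetric difference of sets. -/
/-!
Counting the inversions of `(H, J)` element by element, from either side, writes `α H J` as a
product over `H` and as a product over `J`. Since signs square to one, the factors indexed by
`H ∩ J` cancel, so `α` is multiplicative in each argument with respect to `∆`; the cocycle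
identity then reduces to commutativity.
-/

open Finset

theorem Finset.prod_symmDiff_of_mul_self_eq_one {ι G : Type*} [DecidableEq ι] [CommMonoid G]
    {f : ι → G} {s t : Finset ι} (hf : ∀ i ∈ s ∩ t, f i * f i = 1) :
    ∏ i ∈ symmDiff s t, f i = (∏ i ∈ s, f i) * ∏ i ∈ t, f i := by
  have hdisj : Disjoint (symmDiff s t) (s ∩ t) :=
    disjoint_left.2 fun i hi hst => by
      rw [mem_symmDiff] at hi
      rw [mem_inter] at hst
      tauto
  have hunion : symmDiff s t ∪ s ∩ t = s ∪ t := by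
    rw [symmDiff_eq_sup_sdiff_inf, sup_eq_union, inf_eq_inter,
      sdiff_union_of_subset inter_subset_union]
  have hsq : (∏ i ∈ s ∩ t, f i) * ∏ i ∈ s ∩ t, f i = 1 := by
    rw [← prod_mul_distrib]
    exact prod_eq_one hf
  calc ∏ i ∈ symmDiff s t, f i
      = (∏ i ∈ symmDiff s t, f i) * ((∏ i ∈ s ∩ t, f i) * ∏ i ∈ s ∩ t, f i) := by
        rw [hsq, mul_one]
    _ = (∏ i ∈ s ∪ t, f i) * ∏ i ∈ s ∩ t, f i := by
      rw [← mul_assoc, ← prod_union hdisj, hunion]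
    _ = (∏ i ∈ s, f i) * ∏ i ∈ t, f i := prod_union_inter

section Inversions

variable {M R : Type*} [LT M] [DecidableLT M] [CommMonoid R] (a : R) (A B : Finset M)

theorem pow_card_inversions_eq_prod_left :
    a ^ #{p ∈ A ×ˢ B | p.2 < p.1} = ∏ i ∈ A, a ^ #{j ∈ B | j < i} := by
  rw [card_filter, sum_product, ← prod_pow_eq_pow_sum]
  simp only [card_filter]

theorem pow_card_inversions_eq_prod_right :
    a ^ #{p ∈ A ×ˢ B | p.2 < p.1} = ∏ j ∈ B, a ^ #{i ∈ A | j < i} := by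
  rw [card_filter, sum_product_right, ← prod_pow_eq_pow_sum]
  simp only [card_filter]

end Inversions

/-- For a linearly ordered set `M` and finite subsets `H J : Finset M`,
let `α H J = (-1)^{#{(i,j) ∈ H × J : j < i}}`. Then
`α H J * α (H ∆ J) K = α H (J ∆ K) * α J K`. -/
theorem alpha_cocycle {M : Type*} [LinearOrder M]
    (α : Finset M → Finset M → ℤ)
    (hα : ∀ H J : Finset M,
      α H J = (-1 : ℤ) ^ ((H ×ˢ J).filter (fun p => p.2 < p.1)).card)
    (H J K : Finset M) :
    α H J * α (symmDiff H J) K = α H (symmDiff J K) * α J K := by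
  have sign_mul_self (n : ℕ) : (-1 : ℤ) ^ n * (-1) ^ n = 1 := by
    rw [← mul_pow, neg_one_mul, neg_neg, one_pow]
  have symmDiff_left : α (symmDiff H J) K = α H K * α J K := by
    simp only [hα, pow_card_inversions_eq_prod_left]
    exact prod_symmDiff_of_mul_self_eq_one fun _ _ => sign_mul_self _
  have symmDiff_right : α H (symmDiff J K) = α H J * α H K := by
    simp only [hα, pow_card_inversions_eq_prod_right]
    exact prod_symmDiff_of_mul_self_eq_one fun _ _ => sign_mul_self _
  rw [symmDiff_left, symmDiff_right]
  ring
end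

section
/- Let R be a commutative ring, M a linearly ordered set, and q : M → R a function. For finite subsets H, J of M define σ(H,J) = α(H,J) · β(H,J) ∈ R, where α(H,J) = (-1)^{|{(i,j) ∈ H × J : j < i}|} and β(H,J) = ∏_{i ∈ H ∩ J} q(i). Then for all finite subsets H, J, K of M one has σ(H,J) · σ(H Δ J, K) = σ(H, J Δ K) · σ(J,K). (This is the associativity cocycle identity for the structure constants of the Clifford algebra constructed on the basis (e_K) indexed by finite subsets K of M, with product e_H e_J = σ(H,J) e_{H Δ J}.) -/
/-! Both factors of `σ` are "bimultiplicative" with respect to `∆`. The inversion set of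
`(H ∆ J, K)` is the symmetric difference of those of `(H, K)` and `(J, K)`, and
`(-1) ^ #(s ∆ t) = (-1) ^ #s * (-1) ^ #t`, so the signs on both sides reduce to the product of
the signs of `(H, J)`, `(H, K)` and `(J, K)`. The weights on both sides are the product of `q`
over the elements lying in at least two of `H`, `J`, `K`. -/

open Finset
open scoped symmDiff

namespace Finset

variable {α : Type*} [DecidableEq α]

theorem card_symmDiff_add_two_mul_card_inter (s t : Finset α) :
    #(s ∆ t) + 2 * #(s ∩ t) = #s + #t := by
  rw [Finset.symmDiff_def, card_union_of_disjoint disjoint_sdiff_sdiff, two_mul]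
  have := card_sdiff_add_card_inter s t
  have := card_sdiff_add_card_inter t s
  rw [inter_comm t s] at this
  omega

theorem neg_one_pow_card_symmDiff {R : Type*} [Monoid R] [HasDistribNeg R] (s t : Finset α) :
    (-1 : R) ^ #(s ∆ t) = (-1) ^ #s * (-1) ^ #t := by
  rw [← pow_add, ← card_symmDiff_add_two_mul_card_inter, pow_add, pow_mul]
  simp

theorem filter_symmDiff (p : α → Prop) [DecidablePred p] (s t : Finset α) :
    (s ∆ t).filter p = s.filter p ∆ t.filter p := by
  ext x
  simp only [mem_filter, mem_symmDiff]
  tauto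

theorem symmDiff_product {β : Type*} [DecidableEq β] (s t : Finset α) (u : Finset β) :
    (s ∆ t) ×ˢ u = (s ×ˢ u) ∆ (t ×ˢ u) := by
  ext ⟨a, b⟩
  simp only [mem_product, mem_symmDiff]
  tauto

theorem product_symmDiff {β : Type*} [DecidableEq β] (s : Finset β) (t u : Finset α) :
    s ×ˢ (t ∆ u) = (s ×ˢ t) ∆ (s ×ˢ u) := by
  ext ⟨a, b⟩
  simp only [mem_product, mem_symmDiff]
  tauto

theorem prod_inter_mul_prod_symmDiff_inter {β : Type*} [CommMonoid β] (f : α → β)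
    (s t u : Finset α) :
    (∏ x ∈ s ∩ t, f x) * ∏ x ∈ s ∆ t ∩ u, f x = ∏ x ∈ s ∩ t ∪ s ∩ u ∪ t ∩ u, f x := by
  rw [← prod_union]
  · congr 1
    ext x
    simp only [mem_union, mem_inter, mem_symmDiff]
    tauto
  · rw [disjoint_left]
    intro x hx hx'
    simp only [mem_inter, mem_symmDiff] at hx hx'
    tauto

theorem prod_inter_symmDiff_cocycle {β : Type*} [CommMonoid β] (f : α → β)
    (s t u : Finset α) :
    (∏ x ∈ s ∩ t, f x) * ∏ x ∈ s ∆ t ∩ u, f x = (∏ x ∈ s ∩ t ∆ u, f x) * ∏ x ∈ t ∩ u, f x := by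
  rw [prod_inter_mul_prod_symmDiff_inter, mul_comm, inter_comm s (t ∆ u),
    prod_inter_mul_prod_symmDiff_inter]
  congr 1
  ext x
  simp only [mem_union, mem_inter]
  tauto

end Finset

section Inversions

variable {M : Type*} [LinearOrder M]

def inversions (A B : Finset M) : Finset (M × M) :=
  (A ×ˢ B).filter fun p => p.2 < p.1

theorem inversions_symmDiff_left (A B C : Finset M) :
    inversions (A ∆ B) C = inversions A C ∆ inversions B C := by
  rw [inversions, symmDiff_product, filter_symmDiff]
  rfl

theorem inversions_symmDiff_right (A B C : Finset M) :
    inversions A (B ∆ C) = inversions A B ∆ inversions A C := by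
  rw [inversions, product_symmDiff, filter_symmDiff]
  rfl

end Inversions

/-- For a commutative ring `R`, a linearly ordered set `M`, `q : M → R`,
and finite subsets `H J : Finset M`, let
`σ H J = (-1)^{#{(i,j) ∈ H × J : j < i}} * ∏ i ∈ H ∩ J, q i` in `R`. Then
`σ H J * σ (H ∆ J) K = σ H (J ∆ K) * σ J K`. -/
theorem sigma_cocycle {R : Type*} [CommRing R] {M : Type*} [LinearOrder M]
    (q : M → R)
    (σ : Finset M → Finset M → R)
    (hσ : ∀ H J : Finset M,
      σ H J = (-1 : R) ^ ((H ×ˢ J).filter (fun p => p.2 < p.1)).card * ∏ i ∈ H ∩ J, q i)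
    (H J K : Finset M) :
    σ H J * σ (symmDiff H J) K = σ H (symmDiff J K) * σ J K := by
  have hσ' : ∀ A B : Finset M, σ A B = (-1 : R) ^ #(inversions A B) * ∏ i ∈ A ∩ B, q i := hσ
  have hq := prod_inter_symmDiff_cocycle q H J K
  rw [hσ', hσ', hσ', hσ', inversions_symmDiff_left, inversions_symmDiff_right,
    neg_one_pow_card_symmDiff, neg_one_pow_card_symmDiff]
  linear_combination
    (-1 : R) ^ #(inversions H J) * (-1) ^ #(inversions H K) * (-1) ^ #(inversions J K) * hq
end

section
/- Let V be a vector space over a field K and let x₁, x₂, …, x_p ∈ V. Then the family (x₁, …, x_p) is linearly independent if and only if the exterior product ι(x₁) ∧ ι(x₂) ∧ ⋯ ∧ ι(x_p) is nonzero in the exterior algebra Λ(V). -/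
/-!
A linearly independent family `x` is a basis of its span `W`, so its `p`-fold products form a basis
of `⋀^p W`; over a field `⋀^p W → ⋀^p V` is injective, so they stay linearly independent in
`⋀^p V`, and the product of all of `x` is one of them, hence nonzero. Conversely, `ιMulti` is
alternating, so it vanishes on linearly dependent families.
-/

namespace ExteriorAlgebra

theorem ιMulti_ne_zero_of_linearIndependent {K V : Type*} [Field K] [AddCommGroup V]
    [Module K V] {n : ℕ} {x : Fin n → V} (hx : LinearIndependent K x) :
    ιMulti K n x ≠ 0 := by
  have hne := (exteriorPower.ιMulti_family_linearIndependent_field (n := n) hx).ne_zero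
    (Set.powersetCard.ofFinEmbEquiv ((OrderIso.refl (Fin n)).toOrderEmbedding))
  rw [← exteriorPower.ιMulti_apply_coe, ne_eq, Submodule.coe_eq_zero]
  simpa [exteriorPower.ιMulti_family] using hne

theorem ιMulti_ne_zero_iff_linearIndependent {K V : Type*} [Field K] [AddCommGroup V]
    [Module K V] {n : ℕ} (x : Fin n → V) :
    ιMulti K n x ≠ 0 ↔ LinearIndependent K x :=
  ⟨fun h => by_contra fun hx => h ((ιMulti K n).map_linearDependent x hx),
    ιMulti_ne_zero_of_linearIndependent⟩

end ExteriorAlgebra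

/-- Vectors `x₁, …, x_p` in a vector space `V` over a field `K` are
linearly independent iff `ι x₁ ∧ ι x₂ ∧ ⋯ ∧ ι x_p ≠ 0` in the exterior algebra. -/
theorem linearIndependent_iff_exterior_prod_ne_zero {K : Type*} [Field K]
    {V : Type*} [AddCommGroup V] [Module K V] {p : ℕ} (x : Fin p → V) :
    LinearIndependent K x ↔
      (List.ofFn fun i : Fin p => ExteriorAlgebra.ι K (x i)).prod ≠ 0 := by
  rw [← ExteriorAlgebra.ιMulti_apply, ExteriorAlgebra.ιMulti_ne_zero_iff_linearIndependent]
end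

section
/- Let R be a commutative ring in which 2 is invertible, V an R-module, and Q a quadratic form on V. Let Φ : Cl(Q) → Λ(V) be the canonical module isomorphism between the Clifford algebra of Q and the exterior algebra of V that fixes V (i.e. Φ(ι_Q(x)) = ι_Λ(x) for all x ∈ V). If x₁, …, x_p ∈ V are pairwise orthogonal with respect to the polar form of Q (i.e. Q(x_i + x_j) - Q(x_i) - Q(x_j) = 0 for all i ≠ j), then Φ(ι_Q(x₁)·ι_Q(x₂)⋯ι_Q(x_p)) = ι_Λ(x₁) ∧ ι_Λ(x₂) ∧ ⋯ ∧ ι_Λ(x_p); that is, the Clifford product of pairwise orthogonal vectors corresponds to their exterior product. -/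
/-!
`Φ` is `changeForm` along the bilinear form `B = associated (-Q)`, which satisfies
`Φ (ι v * y) = ι v ∧ Φ y - B v ⌋ Φ y`. Peeling off the vectors one at a time, the contraction
term vanishes because orthogonality makes `B (x i)` kill every later factor `x j`.
-/

namespace CliffordAlgebra

variable {R M : Type*} [CommRing R] [AddCommGroup M] [Module R M] {Q Q' : QuadraticForm R M}

theorem contractLeft_prod_ofFn_ι_eq_zero (d : Module.Dual R M) {n : ℕ} (y : Fin n → M)
    (hd : ∀ i, d (y i) = 0) : contractLeft d (List.ofFn fun i => ι Q (y i)).prod = 0 := by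
  induction n with
  | zero => simp
  | succ n ih =>
    rw [List.ofFn_succ, List.prod_cons, contractLeft_ι_mul, hd, ih _ fun i => hd i.succ,
      zero_smul, mul_zero, sub_zero]

theorem changeForm_prod_ofFn_ι {B : LinearMap.BilinForm R M} (h : B.toQuadraticMap = Q' - Q)
    {n : ℕ} (x : Fin n → M) (hB : ∀ i j, i < j → B (x i) (x j) = 0) :
    changeForm h (List.ofFn fun i => ι Q (x i)).prod = (List.ofFn fun i => ι Q' (x i)).prod := by
  induction n with
  | zero => simp
  | succ n ih =>
    have htail := ih (fun i => x i.succ) fun i j hij => hB _ _ (Fin.succ_lt_succ_iff.mpr hij)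
    have hcontract : contractLeft (B (x 0)) (List.ofFn fun i => ι Q' (x i.succ)).prod = 0 :=
      contractLeft_prod_ofFn_ι_eq_zero _ _ fun i => hB _ _ (Fin.succ_pos i)
    rw [List.ofFn_succ, List.prod_cons, changeForm_ι_mul, htail, hcontract, sub_zero,
      List.ofFn_succ, List.prod_cons]

end CliffordAlgebra

/-- Let `2` be invertible in `R` and let
`Φ = CliffordAlgebra.equivExterior Q : Cl(Q) ≃ₗ[R] Λ(V)` be the canonical module
isomorphism fixing `V`. If `x₁, …, x_p` are pairwise orthogonal for the polar form of
`Q`, then `Φ (ι_Q x₁ ⋯ ι_Q x_p) = ι_Λ x₁ ∧ ⋯ ∧ ι_Λ x_p`. -/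
theorem clifford_prod_orthogonal_eq_exterior_prod {R : Type*} [CommRing R]
    [Invertible (2 : R)] {V : Type*} [AddCommGroup V] [Module R V]
    (Q : QuadraticForm R V) {p : ℕ} (x : Fin p → V)
    (hortho : ∀ i j : Fin p, i ≠ j → Q (x i + x j) - Q (x i) - Q (x j) = 0) :
    CliffordAlgebra.equivExterior Q
        ((List.ofFn fun i : Fin p => CliffordAlgebra.ι Q (x i)).prod) =
      (List.ofFn fun i : Fin p => ExteriorAlgebra.ι R (x i)).prod := by
  refine CliffordAlgebra.changeForm_prod_ofFn_ι
    CliffordAlgebra.changeForm.associated_neg_proof x fun i j hij => ?_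
  have hpolar : -Q (x i + x j) - -Q (x i) - -Q (x j) = 0 := by
    linear_combination -hortho i j hij.ne
  simp only [QuadraticMap.associated_apply, neg_apply, hpolar, smul_zero]
end
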